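/- Let σ > 0, R > 0, and let n ≥ 1 be a natural number. For ȳ ∈ ℝ set a(ȳ) = −√n(R+ȳ)/σ and b(ȳ) = √n(R−ȳ)/σ, and set c = √n·R/σ. Then ∫_ℝ (1/(2R)) · (σ²/n) · [ (Φ(b(ȳ)) − Φ(a(ȳ))) − (b(ȳ)φ(b(ȳ)) − a(ȳ)φ(a(ȳ))) − (φ(b(ȳ)) − φ(a(ȳ)))²/(Φ(b(ȳ)) − Φ(a(ȳ))) ] dȳ = (σ²/n) · [ 1 − (σ/(2√n·R)) ∫_ℝ (φ(x+c) − φ(x−c))²/(Φ(x+c) − Φ(x−c)) dx ]. (The left-hand side is the expected variance of a truncated normal posterior with location ȳ, scale σ²/n and domain [−R,R], where ȳ has density (1/(2R))(Φ(b(ȳ)) − Φ(a(ȳ))).) -/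

import Mathlib

open MeasureTheory

/-- The standard normal density. -/
noncomputable def gaussPdf (x : ℝ) : ℝ :=
  (Real.sqrt (2 * Real.pi))⁻¹ * Real.exp (-(x ^ 2) / 2)

/-- The standard normal CDF. -/
noncomputable def gaussCdf (x : ℝ) : ℝ :=
  ∫ t in Set.Iic x, gaussPdf t

/-!
The substitution `x = -(√n / σ) ȳ` maps `[a(ȳ), b(ȳ)]` to `[x - c, x + c]` and scales the
integral by `σ / √n`. The integrand then splits into three terms. The mass
`Φ(x + c) - Φ(x - c)` is `P(Z - c ≤ x < Z + c)` for `Z` standard normal, so by Tonelli its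
integral is the expected length `2c` of `[Z - c, Z + c)`. The boundary terms `(x ± c) φ(x ± c)`
integrate to `0` by translation invariance. The last term is integrable because
`|φ(b) - φ(a)| = |∫_a^b t φ(t) dt| ≤ max(|a|, |b|) (Φ(b) - Φ(a))`.
-/

open Real Set

open scoped ENNReal in
lemma lintegral_setLIntegral_Ioc_add {f : ℝ → ℝ≥0∞} (hf : Measurable f) (a b : ℝ) :
    ∫⁻ x, ∫⁻ t in Ioc (x + a) (x + b), f t = ENNReal.ofReal (b - a) * ∫⁻ t, f t := by
  have hmeas : Measurable fun p : ℝ × ℝ => (Ioc (p.1 + a) (p.1 + b)).indicator f p.2 := by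
    have hs : MeasurableSet ({p : ℝ × ℝ | p.1 + a < p.2} ∩ {p | p.2 ≤ p.1 + b}) :=
      (measurableSet_lt (by fun_prop) measurable_snd).inter
        (measurableSet_le measurable_snd (by fun_prop))
    exact (hf.comp measurable_snd).indicator hs
  have hswap : ∀ x t, (Ioc (x + a) (x + b)).indicator f t
      = (Ico (t - b) (t - a)).indicator (fun _ => f t) x := by
    intro x t
    simp only [indicator_apply, mem_Ioc, mem_Ico]
    congr 1
    exact propext ⟨fun ⟨h₁, h₂⟩ => ⟨by linarith, by linarith⟩,
      fun ⟨h₁, h₂⟩ => ⟨by linarith, by linarith⟩⟩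
  calc ∫⁻ x, ∫⁻ t in Ioc (x + a) (x + b), f t
      = ∫⁻ x, ∫⁻ t, (Ioc (x + a) (x + b)).indicator f t := by
        simp_rw [lintegral_indicator measurableSet_Ioc]
    _ = ∫⁻ t, ∫⁻ x, (Ico (t - b) (t - a)).indicator (fun _ => f t) x := by
        simp_rw [← hswap]; exact lintegral_lintegral_swap hmeas.aemeasurable
    _ = ∫⁻ t, ENNReal.ofReal (b - a) * f t := by
        congr 1; ext t
        rw [lintegral_indicator_const measurableSet_Ico, Real.volume_Ico, mul_comm]
        congr 2; ring
    _ = ENNReal.ofReal (b - a) * ∫⁻ t, f t := lintegral_const_mul _ hf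

lemma gaussPdf_eq_gaussianPDFReal : gaussPdf = ProbabilityTheory.gaussianPDFReal 0 1 := by
  ext x
  simp [gaussPdf, ProbabilityTheory.gaussianPDFReal]

lemma gaussPdf_pos (x : ℝ) : 0 < gaussPdf x := by
  unfold gaussPdf; positivity

@[fun_prop]
lemma continuous_gaussPdf : Continuous gaussPdf := by
  unfold gaussPdf; fun_prop

lemma integrable_gaussPdf : Integrable gaussPdf :=
  gaussPdf_eq_gaussianPDFReal ▸ ProbabilityTheory.integrable_gaussianPDFReal 0 1

lemma integral_gaussPdf : ∫ x, gaussPdf x = 1 :=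
  gaussPdf_eq_gaussianPDFReal ▸ ProbabilityTheory.integral_gaussianPDFReal_eq_one 0 one_ne_zero

lemma hasDerivAt_gaussPdf (x : ℝ) : HasDerivAt gaussPdf (-x * gaussPdf x) x :=
  ((((hasDerivAt_pow 2 x).neg).div_const 2).exp.const_mul (√(2 * π))⁻¹).congr_deriv
    (by simp only [gaussPdf, Pi.neg_apply]; ring)

lemma integrable_mul_gaussPdf : Integrable fun x => x * gaussPdf x := by
  refine ((integrable_mul_exp_neg_mul_sq (b := 1 / 2) (by norm_num)).const_mul
    (√(2 * π))⁻¹).congr (ae_of_all _ fun x => ?_)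
  simp only [gaussPdf]; ring_nf

lemma integral_mul_gaussPdf_interval (a b : ℝ) :
    ∫ t in a..b, t * gaussPdf t = gaussPdf a - gaussPdf b := by
  rw [intervalIntegral.integral_eq_sub_of_hasDerivAt (f := -gaussPdf)
    (f' := fun t => t * gaussPdf t) (fun t _ => by simpa using (hasDerivAt_gaussPdf t).neg)
    ((continuous_id.mul continuous_gaussPdf).intervalIntegrable (μ := volume) a b),
    Pi.neg_apply, Pi.neg_apply]
  ring

lemma gaussCdf_sub_gaussCdf (a b : ℝ) : gaussCdf b - gaussCdf a = ∫ t in a..b, gaussPdf t :=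
  intervalIntegral.integral_Iic_sub_Iic integrable_gaussPdf.integrableOn
    integrable_gaussPdf.integrableOn

lemma gaussCdf_strictMono : StrictMono gaussCdf := fun a b hab => by
  rw [← sub_pos, gaussCdf_sub_gaussCdf]
  exact intervalIntegral.intervalIntegral_pos_of_pos_on
    (continuous_gaussPdf.intervalIntegrable a b) (fun t _ => gaussPdf_pos t) hab

@[fun_prop]
lemma measurable_gaussCdf : Measurable gaussCdf := gaussCdf_strictMono.monotone.measurable

lemma abs_gaussPdf_sub_le {a b M : ℝ} (hab : a ≤ b) (hM : ∀ t ∈ Icc a b, |t| ≤ M) :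
    |gaussPdf b - gaussPdf a| ≤ M * (gaussCdf b - gaussCdf a) := by
  rw [abs_sub_comm, ← integral_mul_gaussPdf_interval, gaussCdf_sub_gaussCdf,
    ← intervalIntegral.integral_const_mul]
  refine (intervalIntegral.abs_integral_le_integral_abs hab).trans
    (intervalIntegral.integral_mono_on hab ?_ ?_ fun t ht => ?_)
  · exact (continuous_id.mul continuous_gaussPdf).abs.intervalIntegrable _ _
  · exact (continuous_gaussPdf.const_mul M).intervalIntegrable _ _
  · rw [abs_mul, abs_of_pos (gaussPdf_pos t)]
    exact mul_le_mul_of_nonneg_right (hM t ht) (gaussPdf_pos t).le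

lemma sq_gaussPdf_sub_div_le {a b M : ℝ} (hab : a < b) (hM : ∀ t ∈ Icc a b, |t| ≤ M) :
    (gaussPdf b - gaussPdf a) ^ 2 / (gaussCdf b - gaussCdf a)
      ≤ M * (gaussPdf b + gaussPdf a) := by
  have hmass : 0 < gaussCdf b - gaussCdf a := sub_pos.mpr (gaussCdf_strictMono hab)
  have hsum : |gaussPdf b - gaussPdf a| ≤ gaussPdf b + gaussPdf a :=
    abs_sub_le_iff.mpr ⟨by linarith [gaussPdf_pos a], by linarith [gaussPdf_pos b]⟩
  rw [div_le_iff₀ hmass, ← sq_abs, sq]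
  calc |gaussPdf b - gaussPdf a| * |gaussPdf b - gaussPdf a|
      ≤ (gaussPdf b + gaussPdf a) * (M * (gaussCdf b - gaussCdf a)) :=
        mul_le_mul hsum (abs_gaussPdf_sub_le hab.le hM) (abs_nonneg _)
          (add_pos (gaussPdf_pos b) (gaussPdf_pos a)).le
    _ = M * (gaussPdf b + gaussPdf a) * (gaussCdf b - gaussCdf a) := by ring

lemma lintegral_ofReal_gaussCdf_add_sub {a b : ℝ} (hab : a ≤ b) :
    ∫⁻ x, ENNReal.ofReal (gaussCdf (x + b) - gaussCdf (x + a)) = ENNReal.ofReal (b - a) := by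
  have hmass : ∀ x, ENNReal.ofReal (gaussCdf (x + b) - gaussCdf (x + a))
      = ∫⁻ t in Ioc (x + a) (x + b), ENNReal.ofReal (gaussPdf t) := fun x => by
    rw [gaussCdf_sub_gaussCdf, intervalIntegral.integral_of_le (by linarith),
      ofReal_integral_eq_lintegral_ofReal integrable_gaussPdf.integrableOn
        (ae_of_all _ fun t => (gaussPdf_pos t).le)]
  simp_rw [hmass, lintegral_setLIntegral_Ioc_add continuous_gaussPdf.measurable.ennreal_ofReal,
    ← ofReal_integral_eq_lintegral_ofReal integrable_gaussPdf
      (ae_of_all _ fun t => (gaussPdf_pos t).le), integral_gaussPdf, ENNReal.ofReal_one, mul_one]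

lemma gaussCdf_add_sub_nonneg {a b : ℝ} (hab : a ≤ b) (x : ℝ) :
    0 ≤ gaussCdf (x + b) - gaussCdf (x + a) :=
  sub_nonneg.mpr (gaussCdf_strictMono.monotone (by linarith))

lemma integrable_gaussCdf_add_sub {a b : ℝ} (hab : a ≤ b) :
    Integrable fun x => gaussCdf (x + b) - gaussCdf (x + a) := by
  refine ⟨(by fun_prop : Measurable _).aestronglyMeasurable, ?_⟩
  rw [hasFiniteIntegral_iff_ofReal (ae_of_all _ (gaussCdf_add_sub_nonneg hab)),
    lintegral_ofReal_gaussCdf_add_sub hab]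
  exact ENNReal.ofReal_lt_top

lemma integral_gaussCdf_add_sub {a b : ℝ} (hab : a ≤ b) :
    ∫ x, (gaussCdf (x + b) - gaussCdf (x + a)) = b - a := by
  rw [integral_eq_lintegral_of_nonneg_ae (ae_of_all _ (gaussCdf_add_sub_nonneg hab))
    (integrable_gaussCdf_add_sub hab).aestronglyMeasurable, lintegral_ofReal_gaussCdf_add_sub hab,
    ENNReal.toReal_ofReal (sub_nonneg.mpr hab)]

lemma integrable_mul_gaussPdf_add (s : ℝ) : Integrable fun x => x * gaussPdf (x + s) :=
  ((integrable_mul_gaussPdf.comp_add_right s).sub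
    ((integrable_gaussPdf.comp_add_right s).const_mul s)).congr
      (ae_of_all _ fun x => by simp only [Pi.sub_apply]; ring)

lemma integrable_sq_gaussPdf_sub_div {c : ℝ} (hc : 0 < c) :
    Integrable fun x => (gaussPdf (x + c) - gaussPdf (x - c)) ^ 2
      / (gaussCdf (x + c) - gaussCdf (x - c)) := by
  have hbound : Integrable fun x => (|x| + c) * (gaussPdf (x + c) + gaussPdf (x - c)) := by
    refine ((((integrable_mul_gaussPdf_add c).abs.add (integrable_mul_gaussPdf_add (-c)).abs).add
      ((integrable_gaussPdf.comp_add_right c).const_mul c)).add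
      ((integrable_gaussPdf.comp_sub_right c).const_mul c)).congr (ae_of_all _ fun x => ?_)
    simp only [Pi.add_apply, abs_mul, abs_of_pos (gaussPdf_pos _), ← sub_eq_add_neg]
    ring
  refine hbound.mono' (by fun_prop : Measurable _).aestronglyMeasurable (ae_of_all _ fun x => ?_)
  have hlt : x - c < x + c := by linarith
  rw [Real.norm_of_nonneg (div_nonneg (sq_nonneg _) (sub_pos.mpr (gaussCdf_strictMono hlt)).le)]
  exact sq_gaussPdf_sub_div_le hlt fun t ht =>
    abs_le.mpr ⟨by linarith [neg_abs_le x, ht.1], by linarith [le_abs_self x, ht.2]⟩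

/-- `Φ b - Φ a` times the variance of the standard normal distribution truncated to `[a, b]`. -/
noncomputable def truncGaussVarMass (a b : ℝ) : ℝ :=
  (gaussCdf b - gaussCdf a) - (b * gaussPdf b - a * gaussPdf a)
    - (gaussPdf b - gaussPdf a) ^ 2 / (gaussCdf b - gaussCdf a)

lemma integral_truncGaussVarMass {c : ℝ} (hc : 0 < c) :
    ∫ x, truncGaussVarMass (x - c) (x + c)
      = 2 * c - ∫ x, (gaussPdf (x + c) - gaussPdf (x - c)) ^ 2
          / (gaussCdf (x + c) - gaussCdf (x - c)) := by
  have hcdf := integrable_gaussCdf_add_sub (neg_le_self hc.le)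
  have hcdf_int := integral_gaussCdf_add_sub (neg_le_self hc.le)
  simp only [← sub_eq_add_neg, sub_neg_eq_add] at hcdf hcdf_int
  have hpdf : Integrable fun x => (x + c) * gaussPdf (x + c) - (x - c) * gaussPdf (x - c) :=
    (integrable_mul_gaussPdf.comp_add_right c).sub (integrable_mul_gaussPdf.comp_sub_right c)
  have hpdf_int : ∫ x, ((x + c) * gaussPdf (x + c) - (x - c) * gaussPdf (x - c)) = 0 := by
    rw [integral_sub (integrable_mul_gaussPdf.comp_add_right c)
      (integrable_mul_gaussPdf.comp_sub_right c), integral_add_right_eq_self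
      (fun u => u * gaussPdf u), integral_sub_right_eq_self (fun u => u * gaussPdf u), sub_self]
  unfold truncGaussVarMass
  rw [integral_sub ?_ (integrable_sq_gaussPdf_sub_div hc), integral_sub hcdf hpdf,
    hcdf_int, hpdf_int]
  · ring
  · exact hcdf.sub hpdf

/-- The expected variance of a truncated normal posterior with location `ȳ`,
scale `σ²/n` and domain `[−R, R]`, where `ȳ` has density `(1/(2R))(Φ(b(ȳ)) − Φ(a(ȳ)))`,
equals `(σ²/n)(1 − (σ/(2√n R)) ∫_ℝ (φ(x+c) − φ(x−c))²/(Φ(x+c) − Φ(x−c)) dx)`,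
where `c = √n R/σ`. -/
theorem expected_truncated_posterior_variance_eq
    (σ R : ℝ) (hσ : 0 < σ) (hR : 0 < R) (n : ℕ) (hn : 1 ≤ n)
    (a b : ℝ → ℝ) (c : ℝ)
    (ha : ∀ ybar, a ybar = -(Real.sqrt n * (R + ybar) / σ))
    (hb : ∀ ybar, b ybar = Real.sqrt n * (R - ybar) / σ)
    (hc : c = Real.sqrt n * R / σ) :
    ∫ ybar : ℝ,
        (1 / (2 * R)) * (σ ^ 2 / n) *
          ((gaussCdf (b ybar) - gaussCdf (a ybar))
            - (b ybar * gaussPdf (b ybar) - a ybar * gaussPdf (a ybar))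
            - (gaussPdf (b ybar) - gaussPdf (a ybar)) ^ 2 /
                (gaussCdf (b ybar) - gaussCdf (a ybar)))
      = (σ ^ 2 / n) *
          (1 - σ / (2 * Real.sqrt n * R) *
            ∫ x : ℝ, (gaussPdf (x + c) - gaussPdf (x - c)) ^ 2 /
              (gaussCdf (x + c) - gaussCdf (x - c))) := by
  have hn0 : (0 : ℝ) < n := by exact_mod_cast hn
  have hc0 : 0 < c := hc ▸ by positivity
  set K := 1 / (2 * R) * (σ ^ 2 / n) with hK
  set k := -(√(n : ℝ) / σ) with hk
  have hab : ∀ y, a y = k * y - c ∧ b y = k * y + c := fun y => by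
    rw [ha, hb, hc, hk]; constructor <;> field_simp <;> ring
  calc _ = ∫ y, K * truncGaussVarMass (k * y - c) (k * y + c) := by
        simp only [← (hab _).1, ← (hab _).2]; rfl
    _ = |k⁻¹| • ∫ x, K * truncGaussVarMass (x - c) (x + c) :=
        Measure.integral_comp_mul_left (fun x => K * truncGaussVarMass (x - c) (x + c)) k
    _ = _ := by
        rw [integral_const_mul, integral_truncGaussVarMass hc0, smul_eq_mul, inv_neg, abs_neg,
          abs_inv, abs_of_pos (by positivity), hK, hc]
        field_simp
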